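/- Let k ≥ 1 and let t ∈ ℝ. The polynomial f_t^k(s) = t^{2k−1}(s−1)^{2k} + (t−1)^{2k−1} t^{2k−1} − (t−1)^{2k−1} s^{2k} attains its global minimum over s ∈ ℝ uniquely at s = t, and f_t^k(t) = 0. -/

import Mathlib

/-!
Write `2k = n + 1` with `n` odd. The derivative of `s ↦ f_t(s)` is
`(n + 1) * ((t (s - 1))^n - ((t - 1) s)^n)`, and since `t (s - 1) - (t - 1) s = s - t` and
`x ↦ x^n` is strictly increasing, it has the sign of `s - t`. So `f_t` strictly decreases up
to `t` and strictly increases after it, and `f_t(t) = 0` is a ring identity.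
-/

open Set

theorem lt_of_hasDerivAt_neg_left_pos_right {f f' : ℝ → ℝ} {t s : ℝ}
    (hf : ∀ x, HasDerivAt f (f' x) x) (hneg : ∀ x < t, f' x < 0) (hpos : ∀ x, t < x → 0 < f' x)
    (hs : s ≠ t) : f t < f s := by
  have hcont : Continuous f := continuous_iff_continuousAt.2 fun x => (hf x).continuousAt
  rcases hs.lt_or_gt with hst | hts
  · have hanti : StrictAntiOn f (Iic t) :=
      strictAntiOn_of_hasDerivWithinAt_neg (convex_Iic t) hcont.continuousOn
        (fun x _ => (hf x).hasDerivWithinAt)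
        (fun x hx => hneg x (by rwa [interior_Iic, mem_Iio] at hx))
    exact hanti hst.le self_mem_Iic hst
  · have hmono : StrictMonoOn f (Ici t) :=
      strictMonoOn_of_hasDerivWithinAt_pos (convex_Ici t) hcont.continuousOn
        (fun x _ => (hf x).hasDerivWithinAt)
        (fun x hx => hpos x (by rwa [interior_Ici, mem_Ioi] at hx))
    exact hmono self_mem_Ici hts.le hts

/-- The paper's `f_t^k`, with `n = 2k - 1`. -/
def fPoly (n : ℕ) (t s : ℝ) : ℝ :=
  t ^ n * (s - 1) ^ (n + 1) + (t - 1) ^ n * t ^ n - (t - 1) ^ n * s ^ (n + 1)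

theorem fPoly_self (n : ℕ) (t : ℝ) : fPoly n t t = 0 := by
  unfold fPoly; ring

theorem hasDerivAt_fPoly (n : ℕ) (t s : ℝ) :
    HasDerivAt (fPoly n t) ((n + 1) * ((t * (s - 1)) ^ n - ((t - 1) * s) ^ n)) s := by
  have hsub : HasDerivAt (fun x : ℝ => (x - 1) ^ (n + 1)) ((n + 1 : ℕ) * (s - 1) ^ n) s := by
    simpa using ((hasDerivAt_id s).sub_const 1).fun_pow (n + 1)
  have hpow : HasDerivAt (fun x : ℝ => x ^ (n + 1)) ((n + 1 : ℕ) * s ^ n) s :=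
    hasDerivAt_pow (n + 1) s
  refine (((hsub.const_mul (t ^ n)).add_const ((t - 1) ^ n * t ^ n)).fun_sub
    (hpow.const_mul ((t - 1) ^ n))).congr_deriv ?_
  rw [mul_pow, mul_pow]
  push_cast
  ring

theorem fPoly_deriv_pos {n : ℕ} (hn : Odd n) {t s : ℝ} (h : t < s) :
    0 < (n + 1) * ((t * (s - 1)) ^ n - ((t - 1) * s) ^ n) :=
  mul_pos (by positivity) (sub_pos.2 (hn.pow_lt_pow.2 (by linarith)))

theorem fPoly_deriv_neg {n : ℕ} (hn : Odd n) {t s : ℝ} (h : s < t) :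
    (n + 1) * ((t * (s - 1)) ^ n - ((t - 1) * s) ^ n) < 0 :=
  mul_neg_of_pos_of_neg (by positivity) (sub_neg.2 (hn.pow_lt_pow.2 (by linarith)))

theorem fPoly_pos {n : ℕ} (hn : Odd n) {t s : ℝ} (hs : s ≠ t) : 0 < fPoly n t s := by
  rw [← fPoly_self n t]
  exact lt_of_hasDerivAt_neg_left_pos_right (hasDerivAt_fPoly n t)
    (fun _ => fPoly_deriv_neg hn) (fun _ => fPoly_deriv_pos hn) hs

/-- the polynomial `f_t^k` attains its global minimum over `ℝ`
uniquely at `s = t`, where its value is `0`. -/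
theorem stmt_19 (k : ℕ) (hk : 1 ≤ k) (t : ℝ) :
    (t ^ (2 * k - 1) * (t - 1) ^ (2 * k) + (t - 1) ^ (2 * k - 1) * t ^ (2 * k - 1)
        - (t - 1) ^ (2 * k - 1) * t ^ (2 * k) = 0) ∧
    ∀ s : ℝ, s ≠ t →
      0 < t ^ (2 * k - 1) * (s - 1) ^ (2 * k) + (t - 1) ^ (2 * k - 1) * t ^ (2 * k - 1)
          - (t - 1) ^ (2 * k - 1) * s ^ (2 * k) := by
  have hodd : Odd (2 * k - 1) := ⟨k - 1, by omega⟩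
  have hsucc : 2 * k = 2 * k - 1 + 1 := by omega
  rw [hsucc]
  exact ⟨fPoly_self _ t, fun s hs => fPoly_pos hodd hs⟩
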